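/- arXiv:math/0207229 — 4 statements merged into one kernel-verified Lean document; each statement's English description precedes it below -/
import Mathlib

section
/- Let ψ be a holomorphic function mapping the upper half-plane H = {z : Im z > 0} into itself. Then for all r ≥ 1 and θ ∈ (0, π), one has (1/5)|ψ(i)| (sin θ)/r < |ψ(r e^{iθ})| < 5 |ψ(i)| r / sin θ. -/
/-!
Conjugating by Möbius maps that send `i` and `ψ(i)` to `0` turns `ψ` into a holomorphic self-map
of the unit disc fixing `0`, so the Schwarz lemma gives the Schwarz–Pick inequality
`|ψ z - ψ i| ≤ ρ |ψ z - conj (ψ i)|` with `ρ = |z - i| / |z + i| < 1`. Hence `|ψ z| / |ψ i|` lies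
between `(1 - ρ) / (1 + ρ)` and its inverse, and
`(1 + ρ) / (1 - ρ) ≤ 4 / (1 - ρ²) = |z + i|² / Im z ≤ (|z| + 1)² / Im z`,
which is at most `4 r / sin θ` for `z = r e^{iθ}` with `r ≥ 1`.
-/

open Complex ComplexConjugate Metric Set

noncomputable section

def upperHalfPlaneToDisc (w u : ℂ) : ℂ := (u - w) / (u - conj w)

def discToUpperHalfPlane (w ζ : ℂ) : ℂ := (w - conj w * ζ) / (1 - ζ)

theorem norm_sub_lt_norm_sub_conj {u a : ℂ} (hu : 0 < u.im) (ha : 0 < a.im) :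
    ‖u - a‖ < ‖u - conj a‖ := by
  have h : normSq (u - a) < normSq (u - conj a) := by
    simp only [normSq_apply, sub_re, sub_im, conj_re, conj_im]
    nlinarith [mul_pos hu ha]
  rwa [← sq_lt_sq₀ (norm_nonneg _) (norm_nonneg _), Complex.sq_norm, Complex.sq_norm]

theorem sub_conj_ne_zero {u a : ℂ} (hu : 0 < u.im) (ha : 0 < a.im) : u - conj a ≠ 0 :=
  norm_pos_iff.1 ((norm_nonneg _).trans_lt (norm_sub_lt_norm_sub_conj hu ha))

theorem upperHalfPlaneToDisc_mem_ball {w u : ℂ} (hw : 0 < w.im) (hu : 0 < u.im) :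
    upperHalfPlaneToDisc w u ∈ ball (0 : ℂ) 1 := by
  have h := norm_sub_lt_norm_sub_conj hu hw
  rw [mem_ball_zero_iff, upperHalfPlaneToDisc, norm_div,
    div_lt_one ((norm_nonneg _).trans_lt h)]
  exact h

theorem one_sub_ne_zero_of_mem_ball {ζ : ℂ} (hζ : ζ ∈ ball (0 : ℂ) 1) : 1 - ζ ≠ 0 := by
  rw [sub_ne_zero]
  rintro rfl
  simp at hζ

theorem im_discToUpperHalfPlane (w ζ : ℂ) :
    (discToUpperHalfPlane w ζ).im = w.im * (1 - normSq ζ) / normSq (1 - ζ) := by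
  rw [discToUpperHalfPlane, div_im, div_sub_div_same]
  simp only [normSq_apply, sub_re, sub_im, mul_re, mul_im, conj_re, conj_im, one_re, one_im]
  ring

theorem mapsTo_discToUpperHalfPlane {w : ℂ} (hw : 0 < w.im) :
    MapsTo (discToUpperHalfPlane w) (ball 0 1) {z | 0 < z.im} := by
  intro ζ hζ
  have hζ1 : 0 < 1 - normSq ζ := by
    rw [sub_pos, ← Complex.sq_norm]
    exact pow_lt_one₀ (norm_nonneg _) (mem_ball_zero_iff.1 hζ) two_ne_zero
  have hden := normSq_pos.2 (one_sub_ne_zero_of_mem_ball hζ)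
  rw [mem_ofPred_eq, im_discToUpperHalfPlane]
  positivity

theorem differentiableOn_discToUpperHalfPlane (w : ℂ) :
    DifferentiableOn ℂ (discToUpperHalfPlane w) (ball 0 1) :=
  ((differentiableOn_const _).sub ((differentiableOn_const _).mul differentiableOn_id)).div
    ((differentiableOn_const _).sub differentiableOn_id) fun _ => one_sub_ne_zero_of_mem_ball

@[simp]
theorem discToUpperHalfPlane_zero (w : ℂ) : discToUpperHalfPlane w 0 = w := by
  simp [discToUpperHalfPlane]

theorem discToUpperHalfPlane_upperHalfPlaneToDisc {w u : ℂ} (hw : 0 < w.im) (hu : 0 < u.im) :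
    discToUpperHalfPlane w (upperHalfPlaneToDisc w u) = u := by
  have hu' := sub_conj_ne_zero hu hw
  have hw' : w - conj w ≠ 0 := by
    intro h; have := congrArg im h; simp at this; linarith
  have h1 := one_sub_ne_zero_of_mem_ball (upperHalfPlaneToDisc_mem_ball hw hu)
  rw [discToUpperHalfPlane, div_eq_iff h1, upperHalfPlaneToDisc]
  field_simp
  ring

theorem norm_upperHalfPlaneToDisc_le {ψ : ℂ → ℂ} (hψ : DifferentiableOn ℂ ψ {z | 0 < z.im})
    (hmaps : MapsTo ψ {z | 0 < z.im} {z | 0 < z.im}) {w z : ℂ} (hw : 0 < w.im) (hz : 0 < z.im) :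
    ‖upperHalfPlaneToDisc (ψ w) (ψ z)‖ ≤ ‖upperHalfPlaneToDisc w z‖ := by
  have hψw : 0 < (ψ w).im := hmaps hw
  set g := fun ζ => upperHalfPlaneToDisc (ψ w) (ψ (discToUpperHalfPlane w ζ))
  have hφ := mapsTo_discToUpperHalfPlane hw
  have hg : DifferentiableOn ℂ g (ball 0 1) := by
    refine ((hψ.comp (differentiableOn_discToUpperHalfPlane w) hφ).sub_const _).div
      ((hψ.comp (differentiableOn_discToUpperHalfPlane w) hφ).sub_const _) fun ζ hζ =>
      sub_conj_ne_zero (hmaps (hφ hζ)) hψw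
  have hg_maps : MapsTo g (ball 0 1) (closedBall 0 1) := fun ζ hζ =>
    ball_subset_closedBall (upperHalfPlaneToDisc_mem_ball hψw (hmaps (hφ hζ)))
  have hg0 : g 0 = 0 := by simp [g, upperHalfPlaneToDisc]
  have := Complex.norm_le_norm_of_mapsTo_ball hg hg_maps hg0
    (mem_ball_zero_iff.1 (upperHalfPlaneToDisc_mem_ball hw hz))
  simpa [g, discToUpperHalfPlane_upperHalfPlaneToDisc hw hz] using this

theorem one_sub_mul_norm_le_one_add_mul_norm {E : Type*} [SeminormedAddCommGroup E] {u a : E}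
    {ρ : ℝ} (h : ‖u - a‖ ≤ ρ * (‖u‖ + ‖a‖)) : (1 - ρ) * ‖u‖ ≤ (1 + ρ) * ‖a‖ := by
  linarith [norm_sub_norm_le u a]

theorem one_add_le_mul_one_sub_norm_upperHalfPlaneToDisc {z : ℂ} (hz : 0 < z.im) :
    1 + ‖upperHalfPlaneToDisc I z‖ ≤ (‖z‖ + 1) ^ 2 / z.im * (1 - ‖upperHalfPlaneToDisc I z‖) := by
  have hBA : ‖z - I‖ < ‖z + I‖ := by
    simpa using norm_sub_lt_norm_sub_conj hz (by simp : 0 < I.im)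
  have hA : 0 < ‖z + I‖ := (norm_nonneg _).trans_lt hBA
  have hAN : ‖z + I‖ ≤ ‖z‖ + 1 := by simpa using norm_add_le z I
  have hdiff : ‖z + I‖ ^ 2 - ‖z - I‖ ^ 2 = 4 * z.im := by
    simp only [Complex.sq_norm, normSq_apply, add_re, add_im, sub_re, sub_im, I_re, I_im]
    ring
  have key : (‖z + I‖ + ‖z - I‖) * z.im ≤ (‖z‖ + 1) ^ 2 * (‖z + I‖ - ‖z - I‖) := by
    have hsum : ‖z + I‖ + ‖z - I‖ ≤ 2 * (‖z‖ + 1) := by linarith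
    refine le_of_mul_le_mul_left ?_ (by positivity : 0 < ‖z + I‖ + ‖z - I‖)
    nlinarith [mul_le_mul hsum hsum (by positivity) (by positivity)]
  rw [upperHalfPlaneToDisc, conj_I, sub_neg_eq_add, norm_div, div_mul_eq_mul_div,
    le_div_iff₀ hz, one_add_div hA.ne', one_sub_div hA.ne', div_mul_eq_mul_div, mul_div_assoc',
    div_le_div_iff_of_pos_right hA]
  exact key

theorem norm_le_mul_norm_of_mapsTo_upperHalfPlane {ψ : ℂ → ℂ}
    (hψ : DifferentiableOn ℂ ψ {z | 0 < z.im}) (hmaps : MapsTo ψ {z | 0 < z.im} {z | 0 < z.im})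
    {z : ℂ} (hz : 0 < z.im) :
    ‖ψ z‖ ≤ (‖z‖ + 1) ^ 2 / z.im * ‖ψ I‖ ∧ ‖ψ I‖ ≤ (‖z‖ + 1) ^ 2 / z.im * ‖ψ z‖ := by
  set ρ := ‖upperHalfPlaneToDisc I z‖
  have hρ : ρ < 1 := mem_ball_zero_iff.1 (upperHalfPlaneToDisc_mem_ball (by simp) hz)
  have hψI : 0 < (ψ I).im := hmaps (by simp)
  have hψz : 0 < (ψ z).im := hmaps hz
  have hpick : ‖ψ z - ψ I‖ ≤ ρ * (‖ψ z‖ + ‖ψ I‖) := by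
    have h := norm_upperHalfPlaneToDisc_le hψ hmaps (by simp : 0 < I.im) hz
    rw [upperHalfPlaneToDisc, norm_div,
      div_le_iff₀ (norm_pos_iff.2 (sub_conj_ne_zero hψz hψI))] at h
    calc ‖ψ z - ψ I‖ ≤ ρ * ‖ψ z - conj (ψ I)‖ := h
      _ ≤ ρ * (‖ψ z‖ + ‖ψ I‖) := by
        gcongr
        exact (norm_sub_le _ _).trans_eq (by rw [Complex.norm_conj])
  have hK := one_add_le_mul_one_sub_norm_upperHalfPlaneToDisc hz
  have h₁ := one_sub_mul_norm_le_one_add_mul_norm hpick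
  have h₂ := one_sub_mul_norm_le_one_add_mul_norm (by rwa [norm_sub_rev, add_comm] at hpick)
  constructor
  · refine le_of_mul_le_mul_left ?_ (sub_pos.2 hρ)
    nlinarith [norm_nonneg (ψ I)]
  · refine le_of_mul_le_mul_left ?_ (sub_pos.2 hρ)
    nlinarith [norm_nonneg (ψ z)]

end

/-- Carathéodory inequality: if `ψ` maps the upper half-plane holomorphically into
itself, then for `r ≥ 1` and `θ ∈ (0, π)`,
`(1/5)|ψ(i)| sin θ / r < |ψ(r e^{iθ})| < 5 |ψ(i)| r / sin θ`. -/
theorem caratheodory_halfplane (ψ : ℂ → ℂ)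
    (hψ : DifferentiableOn ℂ ψ {z : ℂ | 0 < z.im})
    (hmaps : Set.MapsTo ψ {z : ℂ | 0 < z.im} {z : ℂ | 0 < z.im})
    (r θ : ℝ) (hr : 1 ≤ r) (hθ : θ ∈ Set.Ioo 0 Real.pi) :
    (1 / 5) * ‖ψ I‖ * Real.sin θ / r
        < ‖ψ ((r : ℂ) * Complex.exp (θ * I))‖ ∧
      ‖ψ ((r : ℂ) * Complex.exp (θ * I))‖
        < 5 * ‖ψ I‖ * r / Real.sin θ := by
  have hsin : 0 < Real.sin θ := Real.sin_pos_of_pos_of_lt_pi hθ.1 hθ.2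
  have hr0 : 0 < r := one_pos.trans_le hr
  set z := (r : ℂ) * exp (θ * I)
  have hz_norm : ‖z‖ = r := by simp [z, norm_exp_ofReal_mul_I, hr0.le]
  have hz_im : z.im = r * Real.sin θ := by simp [z, exp_ofReal_mul_I_im]
  have hz : 0 < z.im := hz_im ▸ mul_pos hr0 hsin
  have hK : (‖z‖ + 1) ^ 2 / z.im ≤ 4 * r / Real.sin θ := by
    rw [hz_norm, hz_im, div_le_div_iff₀ (by positivity) hsin]
    nlinarith
  have hψI : 0 < ‖ψ I‖ := norm_pos_iff.2 fun h => by simpa [h] using hmaps (by simp : 0 < I.im)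
  have hψz : 0 < ‖ψ z‖ := norm_pos_iff.2 fun h => by simpa [h] using hmaps hz
  obtain ⟨hupper, hlower⟩ := norm_le_mul_norm_of_mapsTo_upperHalfPlane hψ hmaps hz
  have hlower' : ‖ψ I‖ * Real.sin θ ≤ 4 * r * ‖ψ z‖ := by
    rw [← le_div_iff₀ hsin, ← div_mul_eq_mul_div]
    exact hlower.trans (by gcongr)
  have hupper' : ‖ψ z‖ * Real.sin θ ≤ 4 * r * ‖ψ I‖ := by
    rw [← le_div_iff₀ hsin, ← div_mul_eq_mul_div]
    exact hupper.trans (by gcongr)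
  constructor
  · rw [div_lt_iff₀ hr0]
    nlinarith
  · rw [lt_div_iff₀ hsin]
    nlinarith
end

section
/- Let L be meromorphic in the plane, holomorphic on the open upper half-plane H, real on ℝ, with all poles real. Then every connected component C of Y = {z ∈ H : Im L(z) > 0} is unbounded. -/
/-!
`exp (-i L)` has modulus `exp (Im L)`, so `Im L` obeys the maximum principle on a bounded
component `C` of `Y`. On the frontier of `C` we have `Im L ≤ 0`: in `H` because the frontier
avoids the open set `Y`, on `ℝ` because `L` is real there. This needs `L` continuous up to the
frontier, i.e. no pole in the closure of `Y`: near a pole `x` with residue `r > 0`,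
`Im L(w) = -r Im w / |w - x|² + Im g(w)` with `g` Lipschitz and real on `ℝ`, so
`Im g(w) ≤ K Im w` and `Im L(w) < 0` as soon as `K |w - x|² < r`.
-/

open Complex Filter Topology Set

theorem IsOpen.disjoint_frontier_connectedComponentIn {α : Type*} [TopologicalSpace α]
    [LocallyConnectedSpace α] {F : Set α} (hF : IsOpen F) (x : α) :
    Disjoint (frontier (connectedComponentIn F x)) F := by
  refine disjoint_left.mpr fun z hz hzF => ?_
  obtain ⟨w, hwz, hwx⟩ := mem_closure_iff_nhds.mp (frontier_subset_closure hz) _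
    (hF.connectedComponentIn.mem_nhds (mem_connectedComponentIn hzF))
  have hzx : z ∈ connectedComponentIn F x := by
    rw [connectedComponentIn_eq hwx, ← connectedComponentIn_eq hwz]
    exact mem_connectedComponentIn hzF
  rw [hF.connectedComponentIn.frontier_eq] at hz
  exact hz.2 hzx

theorem im_le_of_forall_mem_frontier_im_le {U : Set ℂ} (hU : Bornology.IsBounded U)
    {f : ℂ → ℂ} (hf : DiffContOnCl ℂ f U) {c : ℝ} (hc : ∀ z ∈ frontier U, (f z).im ≤ c)
    {z : ℂ} (hz : z ∈ closure U) : (f z).im ≤ c := by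
  have hnorm : ∀ w, ‖exp (-(f w * I))‖ = Real.exp (f w).im := by simp [norm_exp]
  have hexp : DiffContOnCl ℂ (fun w => exp (-(f w * I))) U :=
    (show Differentiable ℂ fun u => exp (-(u * I)) by fun_prop).comp_diffContOnCl hf
  have := norm_le_of_forall_mem_frontier_norm_le hU hexp
    (fun w hw => (hnorm w).trans_le (Real.exp_le_exp.mpr (hc w hw))) hz
  rwa [hnorm, Real.exp_le_exp] at this

theorem im_le_mul_abs_im_of_lipschitzOnWith {g : ℂ → ℂ} {K : NNReal} {t : Set ℂ}
    (hg : LipschitzOnWith K g t) {w : ℂ} (hw : w ∈ t) (hwre : (w.re : ℂ) ∈ t)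
    (hreal : (g w.re).im = 0) : (g w).im ≤ K * |w.im| :=
  calc (g w).im = (g w - g w.re).im := by rw [sub_im, hreal, sub_zero]
    _ ≤ dist (g w) (g w.re) :=
      (le_abs_self _).trans ((abs_im_le_norm _).trans_eq (dist_eq _ _).symm)
    _ ≤ K * dist w w.re := hg.dist_le_mul w hw _ hwre
    _ = K * |w.im| := by rw [dist_of_re_eq (by simp), ofReal_im, Real.dist_eq, sub_zero]

theorem im_ofReal_div_sub_add_neg {x r K : ℝ} {w a : ℂ} (hw : 0 < w.im)
    (hK : K * normSq (w - x) < r) (ha : a.im ≤ K * w.im) : ((r : ℂ) / (w - x) + a).im < 0 := by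
  have hn : 0 < normSq (w - x) :=
    normSq_pos.mpr (sub_ne_zero.mpr (UpperHalfPlane.ne_ofReal ⟨w, hw⟩ x))
  have him : ((r : ℂ) / (w - x)).im = -(r * w.im / normSq (w - x)) := by
    simp [div_im]
  rw [add_im, him, neg_add_lt_iff_lt_add, add_zero, lt_div_iff₀ hn]
  nlinarith [mul_le_mul_of_nonneg_right ha hn.le, mul_lt_mul_of_pos_right hK hw]

section SimplePole

variable {L g : ℂ → ℂ} {x r : ℝ}

theorem eventually_im_eq_zero_of_eventually_eq_div_sub_add (hmer : MeromorphicAt L x)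
    (hreal : ∀ s : ℝ, AnalyticAt ℂ L s → (L s).im = 0) (hg : ContinuousAt g x)
    (hL : ∀ᶠ w in 𝓝[≠] (x : ℂ), L w = r / (w - x) + g w) :
    ∀ᶠ s : ℝ in 𝓝 x, (g s).im = 0 := by
  have hofReal : Tendsto ((↑) : ℝ → ℂ) (𝓝[≠] x) (𝓝[≠] (x : ℂ)) :=
    continuous_ofReal.continuousWithinAt.tendsto_nhdsWithin fun _ hs => ofReal_injective.ne hs
  have hpunct : ∀ᶠ s : ℝ in 𝓝[≠] x, (g s).im = 0 := by
    filter_upwards [hofReal.eventually (hmer.eventually_analyticAt.and hL)] with s ⟨hLs, hs⟩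
    have := congrArg im hs
    rwa [add_im, hreal s hLs, ← ofReal_sub, ← ofReal_div, ofReal_im, zero_add, eq_comm] at this
  have hx : (g x).im = 0 :=
    tendsto_nhds_unique
      ((continuous_im.continuousAt.comp (hg.comp continuous_ofReal.continuousAt)).tendsto.mono_left
        nhdsWithin_le_nhds)
      (tendsto_const_nhds.congr' (hpunct.mono fun _ h => h.symm))
  rw [← pure_sup_nhdsNE, eventually_sup, eventually_pure]
  exact ⟨hx, hpunct⟩

theorem eventually_im_neg_of_eventually_eq_div_sub_add (hmer : MeromorphicAt L x)
    (hreal : ∀ s : ℝ, AnalyticAt ℂ L s → (L s).im = 0) (hr : 0 < r) (hg : AnalyticAt ℂ g x)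
    (hL : ∀ᶠ w in 𝓝[≠] (x : ℂ), L w = r / (w - x) + g w) :
    ∀ᶠ w in 𝓝 (x : ℂ), 0 < w.im → (L w).im < 0 := by
  have hgreal := eventually_im_eq_zero_of_eventually_eq_div_sub_add hmer hreal hg.continuousAt hL
  obtain ⟨K, t, ht, hlip⟩ := (hg.contDiffAt (n := 1)).exists_lipschitzOnWith
  have hre : Tendsto (fun w : ℂ => w.re) (𝓝 (x : ℂ)) (𝓝 x) := by
    simpa using continuous_re.tendsto (x : ℂ)
  have hsmall : ∀ᶠ w in 𝓝 (x : ℂ), K * normSq (w - x) < r :=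
    (show Tendsto (fun w : ℂ => K * normSq (w - x)) (𝓝 (x : ℂ)) (𝓝 0) by
      simpa using ((continuous_normSq.comp (continuous_sub_right (x : ℂ))).const_mul
        (K : ℝ)).tendsto (x : ℂ)).eventually_lt_const hr
  filter_upwards [eventually_nhdsWithin_iff.mp hL, ht,
    (continuous_ofReal.tendsto x).comp hre ht, hre.eventually hgreal, hsmall]
    with w hLw hwt hwre hgw hKw hw
  rw [hLw (UpperHalfPlane.ne_ofReal ⟨w, hw⟩ x)]
  exact im_ofReal_div_sub_add_neg hw hKw
    ((im_le_mul_abs_im_of_lipschitzOnWith hlip hwt hwre hgw).trans_eq (by rw [abs_of_pos hw]))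

end SimplePole

section UpperHalfPlane

variable {L : ℂ → ℂ}

theorem analyticAt_of_mem_closure_setOf_im_pos (hmer : MeromorphicOn L univ)
    (hreal : ∀ x : ℝ, AnalyticAt ℂ L (x : ℂ) → (L x).im = 0)
    (hpoles : ∀ z : ℂ, ¬ AnalyticAt ℂ L z →
      z.im = 0 ∧ ∃ r : ℝ, 0 < r ∧ ∃ g : ℂ → ℂ, AnalyticAt ℂ g z ∧
        ∀ᶠ w in 𝓝[{z}ᶜ] z, L w = (r : ℂ) / (w - z) + g w)
    {z : ℂ} (hz : z ∈ closure {z : ℂ | 0 < z.im ∧ 0 < (L z).im}) : AnalyticAt ℂ L z := by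
  by_contra hna
  obtain ⟨hzim, r, hr, g, hg, hL⟩ := hpoles z hna
  rw [← conj_eq_iff_re.mp (conj_eq_iff_im.mpr hzim)] at hL hg hz
  obtain ⟨w, ⟨hw, hLw⟩, hneg⟩ := (mem_closure_iff_frequently.mp hz).and_eventually
    (eventually_im_neg_of_eventually_eq_div_sub_add (hmer _ (mem_univ _)) hreal hr hg hL) |>.exists
  exact (hneg hw).not_gt hLw

theorem im_nonpos_of_mem_closure_of_notMem
    (hreal : ∀ x : ℝ, AnalyticAt ℂ L (x : ℂ) → (L x).im = 0) {z : ℂ} (hL : AnalyticAt ℂ L z)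
    (hz : z ∈ closure {z : ℂ | 0 < z.im ∧ 0 < (L z).im})
    (hzY : z ∉ {z : ℂ | 0 < z.im ∧ 0 < (L z).im}) : (L z).im ≤ 0 := by
  have him : 0 ≤ z.im :=
    closure_minimal (fun w hw => le_of_lt hw.1) (isClosed_le continuous_const continuous_im) hz
  rcases him.eq_or_lt with him | him
  · rw [← conj_eq_iff_re.mp (conj_eq_iff_im.mpr him.symm)] at hL ⊢
    exact (hreal _ hL).le
  · exact not_lt.mp fun h => hzY ⟨him, h⟩

end UpperHalfPlane

theorem components_of_Y_unbounded_general (L : ℂ → ℂ)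
    (hmer : MeromorphicOn L Set.univ)
    (hreal : ∀ x : ℝ, AnalyticAt ℂ L (x : ℂ) → (L x).im = 0)
    (hpoles : ∀ z : ℂ, ¬ AnalyticAt ℂ L z →
      z.im = 0 ∧ ∃ r : ℝ, 0 < r ∧ ∃ g : ℂ → ℂ, AnalyticAt ℂ g z ∧
        ∀ᶠ w in nhdsWithin z {z}ᶜ, L w = (r : ℂ) / (w - z) + g w)
    (Y : Set ℂ) (hY : Y = {z : ℂ | 0 < z.im ∧ 0 < (L z).im}) :
    ∀ z₀ ∈ Y, ¬ Bornology.IsBounded (connectedComponentIn Y z₀) := by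
  subst hY
  set Y := {z : ℂ | 0 < z.im ∧ 0 < (L z).im}
  intro z₀ hz₀ hbdd
  have hA : ∀ z ∈ closure Y, AnalyticAt ℂ L z := fun z hz =>
    analyticAt_of_mem_closure_setOf_im_pos hmer hreal hpoles hz
  have hYopen : IsOpen Y := isOpen_iff_mem_nhds.mpr fun z hz =>
    ((continuous_im.tendsto z).eventually_const_lt hz.1).and
      ((continuous_im.continuousAt.comp (hA z (subset_closure hz)).continuousAt).tendsto
        |>.eventually_const_lt hz.2)
  have hCY : closure (connectedComponentIn Y z₀) ⊆ closure Y :=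
    closure_mono (connectedComponentIn_subset _ _)
  have hfront : ∀ z ∈ frontier (connectedComponentIn Y z₀), (L z).im ≤ 0 := fun z hz =>
    have hzY := hCY (frontier_subset_closure hz)
    im_nonpos_of_mem_closure_of_notMem hreal (hA z hzY) hzY
      (disjoint_left.mp (hYopen.disjoint_frontier_connectedComponentIn z₀) hz)
  have hdiff : DiffContOnCl ℂ L (connectedComponentIn Y z₀) :=
    ⟨fun z hz => (hA z (hCY (subset_closure hz))).differentiableAt.differentiableWithinAt,
      fun z hz => (hA z (hCY hz)).continuousAt.continuousWithinAt⟩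
  exact (im_le_of_forall_mem_frontier_im_le hbdd hdiff hfront
    (subset_closure (mem_connectedComponentIn hz₀))).not_gt hz₀.2

/-- If `L` is meromorphic on ℂ, holomorphic on the upper half-plane `H`, real on ℝ, with
all poles real, simple and of positive residue, then every connected component of
`Y = {z ∈ H : Im L(z) > 0}` is unbounded. -/
theorem components_of_Y_unbounded (L : ℂ → ℂ)
    (hmer : MeromorphicOn L Set.univ)
    (hhol : ∀ z : ℂ, 0 < z.im → AnalyticAt ℂ L z)
    (hreal : ∀ x : ℝ, AnalyticAt ℂ L (x : ℂ) → (L x).im = 0)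
    (hpoles : ∀ z : ℂ, ¬ AnalyticAt ℂ L z →
      z.im = 0 ∧ ∃ r : ℝ, 0 < r ∧ ∃ g : ℂ → ℂ, AnalyticAt ℂ g z ∧
        ∀ᶠ w in nhdsWithin z {z}ᶜ, L w = (r : ℂ) / (w - z) + g w)
    (Y : Set ℂ) (hY : Y = {z : ℂ | 0 < z.im ∧ 0 < (L z).im}) :
    ∀ z₀ ∈ Y, ¬ Bornology.IsBounded (connectedComponentIn Y z₀) :=
  components_of_Y_unbounded_general L hmer hreal hpoles Y hY
end

section
/- Let φ be an entire function of order at most 1, real on the real axis, and suppose there exist constants C > 0, and for each small δ > 0 a set of radii r of logarithmic density 1, such that |φ(z)| > C/r² for |z| = r in this set and δ ≤ |arg z| ≤ π − δ. If φ has only finitely many zeros, then φ is of the form P(z)e^{az} with P a polynomial and a ∈ ℝ; if additionally φ is transcendental and satisfies the lower bound for all arguments bounded away from the real axis on radii of logarithmic density 1, then φ must have infinitely many zeros. -/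
/-!
Dividing out the finitely many zeros writes `φ = P · exp ∘ G` with `P` a polynomial and `G`
entire. The growth bound and the maximum principle give `Re G ≤ (2r)^{3/2}` on `|z| < 2r`, so
Borel–Carathéodory gives `|G| = O(r^{3/2})` on `|z| = r` and the Cauchy estimates make `G`
affine, `G z = b + a z`. If `a` were not real, reality of `φ` on `ℝ` would make
`P(x) e^{2i (Im a) x}` a polynomial in `x`, forcing `P = 0`. Finally, for real `a ≠ 0` the
function `φ` decays exponentially on the ray of argument `π/4` or `3π/4`, against the lower
bound `C/r²` on a set of radii of logarithmic density one, which is unbounded.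
-/

open Complex MeasureTheory Set Filter

/-- `E ⊆ [1,∞)` has logarithmic density 1. -/
def HasLogDensityOne (E : Set ℝ) : Prop :=
  Tendsto (fun r : ℝ => (∫ t in Icc (1:ℝ) r, E.indicator (fun t => 1 / t) t) / Real.log r)
    atTop (nhds 1)

open Polynomial Metric Topology
open scoped Real ComplexConjugate

theorem Differentiable.exists_eq_exp {ψ : ℂ → ℂ} (hψ : Differentiable ℂ ψ) (hψ₀ : ∀ z, ψ z ≠ 0) :
    ∃ G : ℂ → ℂ, Differentiable ℂ G ∧ ∀ z, ψ z = cexp (G z) := by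
  obtain ⟨g, hg⟩ := (hψ.deriv.div hψ hψ₀).isExactOn_univ
  have hg' (z : ℂ) : HasDerivAt g (_root_.deriv ψ z / ψ z) z := hg z (mem_univ z)
  have hconst (z : ℂ) : ψ z * cexp (-g z) = ψ 0 * cexp (-g 0) := by
    refine is_const_of_deriv_eq_zero (hψ.mul fun z ↦ (hg' z).differentiableAt.neg.cexp)
      (fun z ↦ ?_) z 0
    refine (((hψ z).hasDerivAt.mul (hg' z).neg.cexp)).deriv.trans ?_
    field_simp [hψ₀ z]
    ring
  refine ⟨fun z ↦ g z + Complex.log (ψ 0 * cexp (-g 0)),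
    fun z ↦ (hg' z).differentiableAt.add_const _, fun z ↦ ?_⟩
  rw [exp_add, Complex.exp_log (mul_ne_zero (hψ₀ 0) (exp_ne_zero _)), ← hconst z, mul_left_comm,
    ← exp_add, add_neg_cancel, exp_zero, mul_one]

theorem Differentiable.exists_monic_mul_of_zeros_subset {φ : ℂ → ℂ} (hφ : Differentiable ℂ φ)
    (Z : Finset ℂ) (hZ : {z | φ z = 0} ⊆ Z) :
    ∃ P : ℂ[X], P.Monic ∧ ∃ ψ : ℂ → ℂ, Differentiable ℂ ψ ∧ (∀ z, ψ z ≠ 0) ∧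
      ∀ z, φ z = P.eval z * ψ z := by
  induction Z using Finset.induction_on generalizing φ with
  | empty => exact ⟨1, monic_one, φ, hφ, fun z hz ↦ by simpa using hZ hz, by simp⟩
  | insert w Z _ ih =>
    by_cases hφw : φ w = 0
    swap
    · refine ih hφ fun z hz ↦ ?_
      have hzw : z ≠ w := by rintro rfl; exact hφw hz
      simpa [hzw] using hZ hz
    obtain ⟨p, hp⟩ := hφ.analyticAt w
    have hp₀ : p ≠ 0 := by
      intro hp₀
      have hzeros : {z | φ z = 0} ∈ 𝓝 w := hp.locally_zero_iff.mpr hp₀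
      exact infinite_of_mem_nhds w hzeros ((Z.finite_toSet.insert w).subset (by simpa using hZ))
    have hψ : Differentiable ℂ ((Function.swap dslope w)^[p.order] φ) :=
      Function.Iterate.rec (Differentiable ℂ) hφ (fun g hg ↦ differentiableOn_univ.mp
        ((differentiableOn_dslope univ_mem).mpr hg.differentiableOn)) p.order
    set ψ := (Function.swap dslope w)^[p.order] φ
    have hψw : ψ w ≠ 0 := hp.iterate_dslope_fslope_ne_zero hp₀
    have hφψ (z : ℂ) : φ z = (z - w) ^ p.order * ψ z := hp.eq_pow_order_mul_iterate_dslope z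
    obtain ⟨P, hP, χ, hχ, hχ₀, hψχ⟩ := ih hψ fun z (hz : ψ z = 0) ↦ by
      have hzw : z ≠ w := by rintro rfl; exact hψw hz
      have hφz : φ z = 0 := by rw [hφψ, hz, mul_zero]
      simpa [hzw] using hZ hφz
    exact ⟨(X - C w) ^ p.order * P, ((monic_X_sub_C w).pow _).mul hP, χ, hχ, hχ₀,
      fun z ↦ by simp [hφψ z, hψχ z, mul_assoc]⟩

section Growth

variable {E : Type*} [NormedAddCommGroup E] [NormedSpace ℂ E] [CompleteSpace E] {f : ℂ → E}

theorem Differentiable.iteratedDeriv_eq_zero_of_norm_le (hf : Differentiable ℂ f) {s A B : ℝ}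
    {n : ℕ} (hn : 0 < n) (hsn : s < n)
    (h : ∀ᶠ R in atTop, ∀ z ∈ sphere (0 : ℂ) R, ‖f z‖ ≤ A * R ^ s + B) :
    iteratedDeriv n f 0 = 0 := by
  have hlim : Tendsto (fun R : ℝ ↦ n.factorial * (A * R ^ (-(n - s)) + B * R ^ (-(n : ℝ))))
      atTop (𝓝 0) := by
    simpa using (((tendsto_rpow_neg_atTop (sub_pos.2 hsn)).const_mul A).add
      ((tendsto_rpow_neg_atTop (Nat.cast_pos.2 hn)).const_mul B)).const_mul (n.factorial : ℝ)
  refine norm_le_zero_iff.mp (ge_of_tendsto hlim ?_)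
  filter_upwards [h, eventually_gt_atTop 0] with R hR hR₀
  refine (norm_iteratedDeriv_le_of_forall_mem_sphere_norm_le n hR₀ hf.diffContOnCl hR).trans_eq ?_
  rw [neg_sub, Real.rpow_sub hR₀, Real.rpow_neg hR₀.le, Real.rpow_natCast]
  field_simp

theorem Differentiable.eq_add_smul_deriv_of_norm_le (hf : Differentiable ℂ f) {s A B : ℝ}
    (hs : s < 2) (h : ∀ᶠ R in atTop, ∀ z ∈ sphere (0 : ℂ) R, ‖f z‖ ≤ A * R ^ s + B) (z : ℂ) :
    f z = f 0 + z • _root_.deriv f 0 := by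
  have htaylor := Complex.hasSum_taylorSeries_of_entire hf 0 z
  have hpoly : HasSum (fun n : ℕ ↦ (n.factorial : ℂ)⁻¹ • (z - 0) ^ n • iteratedDeriv n f 0)
      (∑ n ∈ Finset.range 2, (n.factorial : ℂ)⁻¹ • (z - 0) ^ n • iteratedDeriv n f 0) := by
    refine hasSum_sum_of_ne_finset_zero fun n hn ↦ ?_
    have h2n : 2 ≤ n := not_lt.mp (mt Finset.mem_range.mpr hn)
    rw [hf.iteratedDeriv_eq_zero_of_norm_le (by omega) (hs.trans_le (by exact_mod_cast h2n)) h,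
      smul_zero, smul_zero]
  simpa [Finset.sum_range_succ] using htaylor.unique hpoly

end Growth

theorem Differentiable.norm_le_of_re_le_on_ball {G : ℂ → ℂ} (hG : Differentiable ℂ G) {R M : ℝ}
    (hR : 0 < R) (hM : 0 < M) (hre : ∀ z ∈ ball (0 : ℂ) (2 * R), (G z).re ≤ M) {z : ℂ}
    (hz : z ∈ sphere (0 : ℂ) R) : ‖G z‖ ≤ 2 * M + 3 * ‖G 0‖ := by
  rw [mem_sphere_zero_iff_norm] at hz
  have hbc := Complex.borelCaratheodory hM hG.differentiableOn hre (by positivity)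
    (z := z) (by rw [mem_ball_zero_iff]; linarith)
  rw [hz] at hbc
  convert hbc using 1
  field_simp
  ring

theorem Differentiable.eq_add_mul_deriv_of_norm_exp_le {G : ℂ → ℂ} (hG : Differentiable ℂ G)
    {s : ℝ} (hs : s < 2)
    (h : ∀ᶠ R in atTop, ∀ z ∈ sphere (0 : ℂ) R, ‖cexp (G z)‖ ≤ Real.exp (R ^ s)) (z : ℂ) :
    G z = G 0 + z * _root_.deriv G 0 := by
  refine hG.eq_add_smul_deriv_of_norm_le (A := 2 * 2 ^ s) (B := 3 * ‖G 0‖) hs ?_ z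
  filter_upwards [(tendsto_id.const_mul_atTop two_pos).eventually h, eventually_gt_atTop 0]
    with R hR hR₀ z hz
  have hre (w : ℂ) (hw : w ∈ ball (0 : ℂ) (2 * R)) : (G w).re ≤ (2 * R) ^ s := by
    rw [← Real.exp_le_exp, ← Complex.norm_exp]
    exact Complex.norm_le_of_forall_mem_frontier_norm_le isBounded_ball hG.cexp.diffContOnCl
      (fun w hw ↦ hR w (frontier_ball_subset_sphere hw)) (subset_closure hw)
  calc ‖G z‖ ≤ 2 * (2 * R) ^ s + 3 * ‖G 0‖ :=
        hG.norm_le_of_re_le_on_ball hR₀ (by positivity) hre hz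
    _ = 2 * 2 ^ s * R ^ s + 3 * ‖G 0‖ := by rw [Real.mul_rpow zero_le_two hR₀.le]; ring

theorem Polynomial.Monic.eventually_one_le_norm_eval {P : ℂ[X]} (hP : P.Monic) :
    ∀ᶠ R in atTop, ∀ z : ℂ, ‖z‖ = R → 1 ≤ ‖P.eval z‖ := by
  rcases eq_or_ne P.natDegree 0 with hdeg | hdeg
  · simp [eq_one_of_monic_natDegree_zero hP hdeg]
  have h := (P.tendsto_norm_atTop (natDegree_pos_iff_degree_pos.mp (Nat.pos_of_ne_zero hdeg))
    tendsto_norm_cobounded_atTop).eventually_ge_atTop 1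
  rw [← comap_norm_atTop, eventually_comap] at h
  filter_upwards [h] with R hR z hz using hR z hz

theorem Differentiable.exists_polynomial_mul_exp_of_finite_zeros {φ : ℂ → ℂ}
    (hφ : Differentiable ℂ φ) (hfin : {z | φ z = 0}.Finite) {s : ℝ} (hs : s < 2)
    (hgrowth : ∀ᶠ R in atTop, ∀ z : ℂ, ‖z‖ = R → ‖φ z‖ ≤ Real.exp (R ^ s)) :
    ∃ (P : ℂ[X]) (a : ℂ), ∀ z, φ z = P.eval z * cexp (a * z) := by
  obtain ⟨P, hP, ψ, hψ, hψ₀, hφψ⟩ := hφ.exists_monic_mul_of_zeros_subset hfin.toFinset (by simp)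
  obtain ⟨G, hG, hψG⟩ := hψ.exists_eq_exp hψ₀
  have hGgrowth : ∀ᶠ R in atTop, ∀ z ∈ sphere (0 : ℂ) R, ‖cexp (G z)‖ ≤ Real.exp (R ^ s) := by
    filter_upwards [hgrowth, hP.eventually_one_le_norm_eval] with R hφR hPR z hz
    rw [mem_sphere_zero_iff_norm] at hz
    calc ‖cexp (G z)‖ ≤ ‖P.eval z‖ * ‖ψ z‖ := by
          rw [← hψG]; exact le_mul_of_one_le_left (norm_nonneg _) (hPR z hz)
      _ ≤ Real.exp (R ^ s) := by rw [← norm_mul, ← hφψ]; exact hφR z hz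
  refine ⟨C (cexp (G 0)) * P, _root_.deriv G 0, fun z ↦ ?_⟩
  rw [hφψ, hψG, hG.eq_add_mul_deriv_of_norm_exp_le hs hGgrowth z, exp_add, eval_mul, eval_C,
    mul_comm z]
  ring

theorem Polynomial.eq_zero_of_eval_mul_exp_eq {P Q : ℂ[X]} {b : ℝ} (hb : b ≠ 0)
    (h : ∀ x : ℝ, P.eval ↑x * cexp (b * x * I) = Q.eval ↑x) : P = 0 := by
  have hb' : (b : ℂ) ≠ 0 := ofReal_ne_zero.mpr hb
  -- On the progression `x = (θ + 2πk) / b` the factor `exp (b x I)` is the constant `exp (θ I)`.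
  have hθ (θ : ℝ) : C (cexp (θ * I)) * P = Q := by
    have hinj : Function.Injective fun k : ℤ ↦ (((θ + 2 * π * k) / b : ℝ) : ℂ) := by
      intro k l hkl
      have := ofReal_injective hkl
      field_simp at this
      simpa [Real.pi_ne_zero] using this
    refine eq_of_infinite_eval_eq _ _ ((Set.infinite_range_of_injective hinj).mono ?_)
    rintro _ ⟨k, rfl⟩
    rw [mem_ofPred_eq, ← h, eval_mul, eval_C, mul_comm]
    congr 1
    rw [show (b : ℂ) * (((θ + 2 * π * k) / b : ℝ) : ℂ) * I = θ * I + k * (2 * π * I) by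
      push_cast; field_simp, exp_add, exp_int_mul_two_pi_mul_I, mul_one]
  have h0 : P = Q := by simpa using hθ 0
  have hπ : -P = Q := by simpa using hθ π
  simpa [neg_eq_iff_add_eq_zero, ← two_mul] using hπ.trans h0.symm

theorem exists_polynomial_mul_exp_ofReal_of_conj {φ : ℂ → ℂ}
    (hreal : ∀ x : ℝ, conj (φ x) = φ x) {P : ℂ[X]} {a : ℂ}
    (hφ : ∀ z, φ z = P.eval z * cexp (a * z)) :
    ∃ (Q : ℂ[X]) (b : ℝ), ∀ z, φ z = Q.eval z * cexp (b * z) := by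
  by_cases ha : a.im = 0
  · exact ⟨P, a.re, fun z ↦ by rw [hφ, show (a.re : ℂ) = a from Complex.ext rfl (by simp [ha])]⟩
  have hP : P = 0 := by
    refine eq_zero_of_eval_mul_exp_eq (b := 2 * a.im) (Q := P.map conj) (by simpa using ha)
      fun x ↦ ?_
    have hexp : ((2 * a.im : ℝ) : ℂ) * x * I = a * x + -(conj a * x) := by
      rw [← sub_eq_add_neg, ← sub_mul, sub_conj]
      ring
    calc P.eval ↑x * cexp (↑(2 * a.im) * x * I)
        = P.eval ↑x * cexp (a * x) * cexp (-(conj a * x)) := by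
          rw [hexp, exp_add, mul_assoc]
      _ = (P.map conj).eval ↑x := by
          rw [← hφ, ← hreal, hφ, map_mul, ← exp_conj, map_mul, conj_ofReal, mul_assoc, ← exp_add,
            add_neg_cancel, exp_zero, mul_one, ← eval_map_apply, conj_ofReal]
  exact ⟨0, 0, fun z ↦ by simp [hφ, hP]⟩

theorem Polynomial.tendsto_eval_mul_exp_nhds_zero (P : ℂ[X]) {a w : ℂ} (h : (a * w).re < 0) :
    Tendsto (fun r : ℝ ↦ P.eval (r * w) * cexp (a * (r * w))) atTop (𝓝 0) := by
  have hw : w ≠ 0 := by rintro rfl; simp at h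
  have hray : Tendsto (fun r : ℝ ↦ (r : ℂ) * w) atTop (Bornology.cobounded ℂ) := by
    rw [← tendsto_norm_atTop_iff_cobounded]
    simpa [norm_mul] using tendsto_abs_atTop_atTop.atTop_mul_const (norm_pos_iff.mpr hw)
  have hP : (fun r : ℝ ↦ P.eval (r * w)) =O[atTop] fun r : ℝ ↦ ((r : ℂ) * w) ^ P.natDegree := by
    simpa only [Function.comp_def, eval_pow, eval_X] using
      (isBigO_cobounded_of_degree_le (P := P) (Q := X ^ P.natDegree)
        (by simp [degree_le_natDegree])).comp_tendsto hray
  refine (hP.mul (Asymptotics.isBigO_refl _ _)).trans_tendsto ?_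
  rw [tendsto_zero_iff_norm_tendsto_zero]
  have hdecay := (tendsto_rpow_mul_exp_neg_mul_atTop_nhds_zero P.natDegree _
    (neg_pos.mpr h)).const_mul (‖w‖ ^ P.natDegree)
  rw [mul_zero] at hdecay
  refine hdecay.congr' ?_
  filter_upwards [eventually_ge_atTop 0] with r hr
  rw [norm_mul, norm_pow, norm_mul, norm_exp, norm_real, Real.norm_of_nonneg hr,
    Real.rpow_natCast, mul_left_comm a, re_ofReal_mul, neg_neg, mul_comm (a * w).re]
  ring

theorem Polynomial.eventually_exists_norm_eval_mul_exp_lt (P : ℂ[X]) {a : ℝ} (ha : a ≠ 0) {C : ℝ}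
    (hC : 0 < C) :
    ∀ᶠ r in atTop, ∃ z : ℂ, ‖z‖ = r ∧ π / 4 ≤ |arg z| ∧ |arg z| ≤ π - π / 4 ∧
      ‖P.eval z * cexp (a * z)‖ < C / r ^ 2 := by
  obtain ⟨θ, hθ₁, hθ₂, hcos⟩ : ∃ θ, π / 4 ≤ θ ∧ θ ≤ π - π / 4 ∧ a * Real.cos θ < 0 := by
    rcases ha.lt_or_gt with ha | ha
    · refine ⟨π / 4, le_rfl, by linarith [Real.pi_pos], mul_neg_of_neg_of_pos ha ?_⟩
      simp [Real.cos_pi_div_four]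
    · refine ⟨π - π / 4, by linarith [Real.pi_pos], le_rfl, mul_neg_of_pos_of_neg ha ?_⟩
      simp [Real.cos_pi_sub, Real.cos_pi_div_four]
  have hdecay := (X ^ 2 * P).tendsto_eval_mul_exp_nhds_zero (a := a) (w := cos θ + sin θ * I)
    (by simpa [← ofReal_cos, ← ofReal_sin] using hcos)
  filter_upwards [hdecay.norm.eventually (gt_mem_nhds (by simpa using hC)),
    eventually_gt_atTop 0] with r hr hr₀
  have harg : |arg ((r : ℂ) * (cos θ + sin θ * I))| = θ := by
    rw [arg_mul_cos_add_sin_mul_I hr₀ ⟨by linarith [Real.pi_pos], by linarith [Real.pi_pos]⟩,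
      abs_of_pos (by linarith [Real.pi_pos])]
  refine ⟨r * (cos θ + sin θ * I), ?_, harg.symm ▸ hθ₁, harg.symm ▸ hθ₂, ?_⟩
  · rw [norm_mul, norm_cos_add_sin_mul_I, norm_real, Real.norm_of_nonneg hr₀.le, mul_one]
  · rw [lt_div_iff₀ (by positivity), norm_mul]
    simp only [eval_mul, eval_pow, eval_X, norm_mul, norm_pow, norm_real, Real.norm_eq_abs,
      norm_cos_add_sin_mul_I, mul_one, sq_abs] at hr
    linarith

theorem HasLogDensityOne.frequently_mem {E : Set ℝ} (hE : HasLogDensityOne E) :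
    ∃ᶠ r in atTop, r ∈ E := by
  rw [frequently_atTop]
  by_contra! hbdd
  obtain ⟨M, hM⟩ := hbdd
  have hconst : ∀ᶠ r in atTop, ∫ t in Icc (1 : ℝ) r, E.indicator (fun t ↦ 1 / t) t
      = ∫ t in Icc (1 : ℝ) M, E.indicator (fun t ↦ 1 / t) t := by
    filter_upwards [eventually_ge_atTop M] with r hr
    refine setIntegral_eq_of_subset_of_forall_sdiff_eq_zero measurableSet_Icc
      (Icc_subset_Icc_right hr) fun t ht ↦ indicator_of_notMem (hM t ?_) _
    by_contra! htM
    exact ht.2 ⟨ht.1.1, htM.le⟩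
  have hlim : Tendsto (fun r ↦ (∫ t in Icc (1 : ℝ) M, E.indicator (fun t ↦ 1 / t) t) / Real.log r)
      atTop (𝓝 1) := hE.congr' (hconst.mono fun r hr ↦ by simp only [hr])
  have := tendsto_nhds_unique hlim (tendsto_const_nhds.div_atTop Real.tendsto_log_atTop)
  norm_num at this

/-- Lemma 6: let `φ` be entire, real on ℝ, of order at most 1, bounded below by `C/r²`
off small sectors around ℝ for radii in a set of logarithmic density 1. If `φ` has
finitely many zeros then `φ(z) = P(z)e^{az}` with `P` a polynomial and `a` real; and if
`φ` is transcendental then `φ` has infinitely many zeros. -/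
theorem infinitely_many_zeros (φ : ℂ → ℂ)
    (hent : Differentiable ℂ φ)
    (hreal : ∀ z, φ (starRingEnd ℂ z) = starRingEnd ℂ (φ z))
    (horder : ∀ ε : ℝ, 0 < ε → ∀ᶠ r : ℝ in atTop,
      ∀ z : ℂ, ‖z‖ = r → ‖φ z‖ ≤ Real.exp (r ^ (1 + ε)))
    (hlow : ∃ C : ℝ, 0 < C ∧ ∀ δ : ℝ, 0 < δ → δ < Real.pi / 2 →
      ∃ E : Set ℝ, E ⊆ Ici 1 ∧ HasLogDensityOne E ∧
        ∀ r ∈ E, ∀ z : ℂ, ‖z‖ = r →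
          δ ≤ |Complex.arg z| → |Complex.arg z| ≤ Real.pi - δ →
          C / r ^ 2 < ‖φ z‖) :
    ({z : ℂ | φ z = 0}.Finite →
      ∃ (P : Polynomial ℂ) (a : ℝ), ∀ z, φ z = P.eval z * Complex.exp ((a : ℂ) * z)) ∧
    ((¬ ∃ p : Polynomial ℂ, ∀ z, φ z = p.eval z) → {z : ℂ | φ z = 0}.Infinite) := by
  have hfactor (hfin : {z : ℂ | φ z = 0}.Finite) :
      ∃ (P : ℂ[X]) (a : ℝ), ∀ z, φ z = P.eval z * cexp (a * z) := by
    obtain ⟨P, a, hPa⟩ := hent.exists_polynomial_mul_exp_of_finite_zeros hfin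
      (s := 1 + 1 / 2) (by norm_num) (horder _ (by norm_num))
    exact exists_polynomial_mul_exp_ofReal_of_conj (fun x ↦ by rw [← hreal, conj_ofReal]) hPa
  refine ⟨hfactor, fun htrans hfin ↦ ?_⟩
  obtain ⟨P, a, hPa⟩ := hfactor hfin
  have ha : a ≠ 0 := by rintro rfl; exact htrans ⟨P, by simpa using hPa⟩
  obtain ⟨C, hC, hlow⟩ := hlow
  obtain ⟨E, -, hE, hφE⟩ := hlow (π / 4) (by positivity) (by linarith [Real.pi_pos])
  obtain ⟨r, hrE, z, hz, harg₁, harg₂, hsmall⟩ :=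
    (hE.frequently_mem.and_eventually (P.eventually_exists_norm_eval_mul_exp_lt ha hC)).exists
  exact (hφE r hrE z hz harg₁ harg₂).not_gt (hPa z ▸ hsmall)
end

section
/- For Q meromorphic in the closed upper half-plane and R ≥ 1: ∫_R^∞ m_{0π}(r, Q)/r³ dr ≤ ∫_R^∞ 𝔪(r, Q)/r² dr, where m_{0π}(r,Q) = (1/2π)∫₀^π log⁺|Q(re^{iθ})| dθ and 𝔪(r,Q) = (1/2π)∫_{arcsin 1/r}^{π−arcsin 1/r} log⁺|Q(r sinθ e^{iθ})|/(r sin²θ) dθ. -/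
open Complex Filter MeasureTheory Set

/-- Positive part of the logarithm: `log⁺ x = max (log x) 0`. -/
noncomputable def logplus (x : ℝ) : ℝ := max (Real.log x) 0

/-- Ordinary half-circle proximity function
`m_{0π}(r, Q) = (1/2π) ∫₀^π log⁺|Q(re^{iθ})| dθ`. -/
noncomputable def mHalfCircle (Q : ℂ → ℂ) (r : ℝ) : ℝ :=
  (1 / (2 * Real.pi)) *
    ∫ θ in (0:ℝ)..Real.pi, logplus (Norm.norm (Q ((r : ℂ) * Complex.exp (θ * Complex.I))))

/-- Tsuji proximity function `𝔪(r, Q)`. -/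
noncomputable def tsujiSmallM (Q : ℂ → ℂ) (r : ℝ) : ℝ :=
  (1 / (2 * Real.pi)) *
    ∫ θ in (Real.arcsin (1/r))..(Real.pi - Real.arcsin (1/r)),
      logplus (Norm.norm (Q (((r * Real.sin θ : ℝ) : ℂ) * Complex.exp (θ * Complex.I)))) /
        (r * Real.sin θ ^ 2)

open scoped ENNReal Real

/-!
Both sides are double integrals of `log⁺ |Q| / 2π` over `(R, ∞) × (0, π)` against explicit
weights. For fixed `θ`, the substitution `r = t sin θ` carries `r > R` onto `t > R / sin θ`, which
lies inside `{t > R, t sin θ ≥ 1}` because `R ≥ 1`, and turns `r⁻³ dr` into `t⁻³ sin⁻² θ dt`;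
Tonelli's theorem exchanges the order of integration before and after. On the Tsuji side the
Bochner integrals must be identified with Lebesgue integrals: the point `t sin θ e^{iθ}` lies on
the circle `|z|² = t Im z`, so the countably many singularities of `Q` meet only countably many
of these circles, and for almost every `t` the integrand is continuous on
`[arcsin (1/t), π - arcsin (1/t)]`.
-/

theorem logplus_eq_posLog : logplus = Real.posLog := funext fun _ => max_comm _ _

theorem logplus_nonneg (x : ℝ) : 0 ≤ logplus x := logplus_eq_posLog ▸ Real.posLog_nonneg

theorem continuous_logplus : Continuous logplus := logplus_eq_posLog ▸ Real.continuous_posLog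

theorem ofReal_integral_le_lintegral_ofReal {α : Type*} [MeasurableSpace α] {μ : Measure α}
    {f : α → ℝ} (hf : ∀ x, 0 ≤ f x) :
    ENNReal.ofReal (∫ x, f x ∂μ) ≤ ∫⁻ x, ENNReal.ofReal (f x) ∂μ :=
  (Real.ofReal_le_enorm _).trans <| (enorm_integral_le_lintegral_enorm f).trans_eq <|
    lintegral_congr fun x => Real.enorm_eq_ofReal (hf x)

theorem lintegral_eq_ofReal_mul_lintegral_comp_mul_right (f : ℝ → ℝ≥0∞) {s : ℝ} (hs : 0 < s) :
    ∫⁻ r, f r = ENNReal.ofReal s * ∫⁻ t, f (t * s) := by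
  conv_lhs => rw [← Real.smul_map_volume_mul_right hs.ne', abs_of_pos hs]
  rw [lintegral_smul_measure, smul_eq_mul]
  exact congrArg _ (lintegral_map_equiv f (Homeomorph.mulRight₀ s hs.ne').toMeasurableEquiv)

theorem lintegral_Ioi_le_lintegral_Ioi_indicator_comp_mul (v : ℝ → ℝ≥0∞) {s R : ℝ}
    (hs : 0 < s) (hs1 : s ≤ 1) (hR : 1 ≤ R) :
    ∫⁻ r in Ioi R, v r * ENNReal.ofReal (r ^ 3)⁻¹ ≤
      ∫⁻ t in Ioi R, {t | 1 ≤ t * s}.indicator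
        (fun t => v (t * s) * ENNReal.ofReal (t ^ 3 * s ^ 2)⁻¹) t := by
  rw [← lintegral_indicator measurableSet_Ioi, ← lintegral_indicator measurableSet_Ioi,
    lintegral_eq_ofReal_mul_lintegral_comp_mul_right _ hs,
    ← lintegral_const_mul' _ _ ENNReal.ofReal_ne_top]
  refine lintegral_mono fun t => ?_
  by_cases ht : R < t * s
  · have ht0 : 0 < t := pos_of_mul_pos_left (by linarith) hs.le
    have htR : R < t := ht.trans_le (mul_le_of_le_one_right ht0.le hs1)
    have ht1 : 1 ≤ t * s := by linarith
    simp only [indicator_of_mem (show t * s ∈ Ioi R from ht),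
      indicator_of_mem (show t ∈ Ioi R from htR),
      indicator_of_mem (show t ∈ {t | 1 ≤ t * s} from ht1)]
    rw [mul_left_comm, ← ENNReal.ofReal_mul hs.le]
    refine le_of_eq (congrArg _ (congrArg _ ?_))
    field_simp
  · simp [indicator_of_notMem (show t * s ∉ Ioi R from ht)]

theorem lintegral_polar_le_lintegral_tangentCircles (F : ℝ → ℝ → ℝ≥0∞)
    (hF : Measurable (Function.uncurry F)) {R : ℝ} (hR : 1 ≤ R) :
    ∫⁻ r in Ioi R, ∫⁻ θ in Ioo 0 π, F r θ * ENNReal.ofReal (r ^ 3)⁻¹ ≤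
      ∫⁻ t in Ioi R, ∫⁻ θ in Ioo 0 π, {θ | 1 ≤ t * Real.sin θ}.indicator
        (fun θ => F (t * Real.sin θ) θ * ENNReal.ofReal (t ^ 3 * Real.sin θ ^ 2)⁻¹) θ := by
  have hF_polar : Measurable fun p : ℝ × ℝ => F p.1 p.2 * ENNReal.ofReal (p.1 ^ 3)⁻¹ := by
    fun_prop
  have hF_tangent : Measurable fun p : ℝ × ℝ => {q : ℝ × ℝ | 1 ≤ q.1 * Real.sin q.2}.indicator
      (fun q => F (q.1 * Real.sin q.2) q.2 * ENNReal.ofReal (q.1 ^ 3 * Real.sin q.2 ^ 2)⁻¹) p := by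
    refine Measurable.indicator ?_ (measurableSet_le measurable_const (by fun_prop))
    have hcoord : Measurable fun q : ℝ × ℝ => (q.1 * Real.sin q.2, q.2) := by fun_prop
    exact (hF.comp hcoord).mul (by fun_prop)
  calc ∫⁻ r in Ioi R, ∫⁻ θ in Ioo 0 π, F r θ * ENNReal.ofReal (r ^ 3)⁻¹
      = ∫⁻ θ in Ioo 0 π, ∫⁻ r in Ioi R, F r θ * ENNReal.ofReal (r ^ 3)⁻¹ :=
        lintegral_lintegral_swap hF_polar.aemeasurable
    _ ≤ ∫⁻ θ in Ioo 0 π, ∫⁻ t in Ioi R, {θ | 1 ≤ t * Real.sin θ}.indicator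
          (fun θ => F (t * Real.sin θ) θ * ENNReal.ofReal (t ^ 3 * Real.sin θ ^ 2)⁻¹) θ :=
        setLIntegral_mono' measurableSet_Ioo fun θ hθ =>
          lintegral_Ioi_le_lintegral_Ioi_indicator_comp_mul (F · θ)
            (Real.sin_pos_of_pos_of_lt_pi hθ.1 hθ.2) (Real.sin_le_one θ) hR
    _ = _ := (lintegral_lintegral_swap hF_tangent.aemeasurable).symm

theorem Real.arcsin_le_and_le_pi_sub_arcsin_iff {x θ : ℝ} (hx : x ∈ Icc (-1) 1)
    (hθ : θ ∈ Icc 0 π) : arcsin x ≤ θ ∧ θ ≤ π - arcsin x ↔ x ≤ sin θ := by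
  have := arcsin_le_pi_div_two x
  rcases le_total θ (π / 2) with h | h
  · rw [← arcsin_le_iff_le_sin hx ⟨by linarith [hθ.1, pi_pos], h⟩]
    exact ⟨And.left, fun h' => ⟨h', by linarith⟩⟩
  · rw [← sin_pi_sub, ← arcsin_le_iff_le_sin hx ⟨by linarith [hθ.2], by linarith⟩]
    exact ⟨fun h' => by linarith [h'.2], fun h' => ⟨by linarith, by linarith⟩⟩

theorem setOf_one_le_mul_sin_inter_Ioo {t : ℝ} (ht : 1 < t) :
    {θ | 1 ≤ t * Real.sin θ} ∩ Ioo 0 π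
      = Icc (Real.arcsin (1 / t)) (π - Real.arcsin (1 / t)) := by
  have ht0 : 0 < t := one_pos.trans ht
  have hx : 1 / t ∈ Icc (-1) 1 := ⟨by linarith [one_div_pos.2 ht0], (div_lt_one ht0).2 ht |>.le⟩
  have ha : 0 < Real.arcsin (1 / t) := Real.arcsin_pos.2 (one_div_pos.2 ht0)
  ext θ
  simp only [mem_inter_iff, mem_ofPred_eq, mem_Ioo, mem_Icc]
  rw [← div_le_iff₀' ht0]
  constructor
  · rintro ⟨hsin, h0, hπ⟩
    exact (Real.arcsin_le_and_le_pi_sub_arcsin_iff hx ⟨h0.le, hπ.le⟩).2 hsin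
  · rintro ⟨h0, hπ⟩
    exact ⟨(Real.arcsin_le_and_le_pi_sub_arcsin_iff hx ⟨by linarith, by linarith⟩).1 ⟨h0, hπ⟩,
      by linarith, by linarith⟩

theorem im_ofReal_mul_exp_mul_I (ρ θ : ℝ) :
    ((ρ : ℂ) * Complex.exp (θ * Complex.I)).im = ρ * Real.sin θ := by
  simp [Complex.exp_ofReal_mul_I_im]

theorem normSq_ofReal_mul_exp_mul_I (ρ θ : ℝ) :
    Complex.normSq ((ρ : ℂ) * Complex.exp (θ * Complex.I)) = ρ ^ 2 := by
  rw [Complex.normSq_mul, Complex.normSq_ofReal, Complex.normSq_eq_norm_sq,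
    Complex.norm_exp_ofReal_mul_I]
  ring

theorem MeromorphicOn.ae_analyticAt_tangentCircle {Q : ℂ → ℂ}
    (hQ : MeromorphicOn Q {z : ℂ | 0 < z.im}) :
    ∀ᵐ t : ℝ, 0 < t → ∀ θ, 0 < Real.sin θ →
      AnalyticAt ℂ Q (((t * Real.sin θ : ℝ) : ℂ) * Complex.exp (θ * Complex.I)) := by
  rw [ae_iff]
  refine measure_mono_null ?_ ((hQ.countable_compl_analyticAt_inter.image
    fun z => Complex.normSq z / z.im).measure_zero volume)
  intro t ht
  simp only [mem_ofPred_eq, Classical.not_imp, not_forall] at ht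
  obtain ⟨ht, θ, hθ, hQθ⟩ := ht
  refine ⟨_, ⟨hQθ, ?_⟩, ?_⟩
  · change 0 < (((t * Real.sin θ : ℝ) : ℂ) * Complex.exp (θ * Complex.I)).im
    rw [im_ofReal_mul_exp_mul_I]
    positivity
  · dsimp only
    rw [normSq_ofReal_mul_exp_mul_I, im_ofReal_mul_exp_mul_I]
    field_simp

theorem MeromorphicOn.measurable_indicator {𝕜 E : Type*} [NontriviallyNormedField 𝕜]
    [MeasurableSpace 𝕜] [SecondCountableTopology 𝕜] [BorelSpace 𝕜]
    [NormedAddCommGroup E] [NormedSpace 𝕜 E] [CompleteSpace E] [MeasurableSpace E] [BorelSpace E]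
    {f : 𝕜 → E} {U : Set 𝕜} (hf : MeromorphicOn f U) (hU : IsOpen U) :
    Measurable (U.indicator f) := by
  classical
  set A := {z | AnalyticAt 𝕜 f z} ∩ U
  have hC := hf.countable_compl_analyticAt_inter
  have := hC.to_subtype
  have hA : Measurable (A.piecewise f 0) :=
    ContinuousOn.measurable_piecewise (fun z hz => hz.1.continuousAt.continuousWithinAt)
      continuousOn_const ((isOpen_analyticAt 𝕜 f).inter hU).measurableSet
  refine measurable_of_restrict_of_restrict_compl hC.measurableSet (measurable_of_countable _) ?_
  convert hA.comp measurable_subtype_coe using 1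
  ext ⟨z, hz⟩
  by_cases hzU : z ∈ U
  · have hzA : z ∈ A := ⟨by simpa [hzU] using hz, hzU⟩
    simp [hzU, hzA]
  · simp [A, hzU]

/-- Restricting `Q` to the open upper half-plane, where it is meromorphic, makes the density
measurable; only values there enter the proximity functions. -/
noncomputable def logplusDensity (Q : ℂ → ℂ) (z : ℂ) : ℝ≥0∞ :=
  ENNReal.ofReal (logplus ‖{w : ℂ | 0 < w.im}.indicator Q z‖ / (2 * π))

theorem logplusDensity_of_im_pos (Q : ℂ → ℂ) {z : ℂ} (hz : 0 < z.im) :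
    logplusDensity Q z = ENNReal.ofReal (logplus ‖Q z‖ / (2 * π)) := by
  rw [logplusDensity, indicator_of_mem (show z ∈ {w : ℂ | 0 < w.im} from hz)]

theorem measurable_logplusDensity {Q : ℂ → ℂ} (hQ : MeromorphicOn Q {z : ℂ | 0 < z.im}) :
    Measurable (logplusDensity Q) :=
  ENNReal.measurable_ofReal.comp <| (continuous_logplus.measurable.comp
    (hQ.measurable_indicator (isOpen_lt continuous_const Complex.continuous_im)).norm).div_const _

theorem ofReal_mHalfCircle_div_cube_le (Q : ℂ → ℂ) {r : ℝ} (hr : 0 < r) :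
    ENNReal.ofReal (mHalfCircle Q r / r ^ 3) ≤
      ∫⁻ θ in Ioo 0 π, logplusDensity Q (r * Complex.exp (θ * Complex.I)) *
        ENNReal.ofReal (r ^ 3)⁻¹ := by
  have h_eq : mHalfCircle Q r / r ^ 3 = ∫ θ in Ioo 0 π,
      logplus ‖Q (r * Complex.exp (θ * Complex.I))‖ / (2 * π) * (r ^ 3)⁻¹ := by
    rw [← integral_Ioc_eq_integral_Ioo, ← intervalIntegral.integral_of_le Real.pi_pos.le,
      intervalIntegral.integral_mul_const, intervalIntegral.integral_div, mHalfCircle]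
    ring
  rw [h_eq]
  refine (ofReal_integral_le_lintegral_ofReal fun θ => by
    have := logplus_nonneg ‖Q (r * Complex.exp (θ * Complex.I))‖; positivity).trans_eq ?_
  refine setLIntegral_congr_fun measurableSet_Ioo fun θ hθ => ?_
  have him : 0 < ((r : ℂ) * Complex.exp (θ * Complex.I)).im := by
    rw [im_ofReal_mul_exp_mul_I]
    exact mul_pos hr (Real.sin_pos_of_pos_of_lt_pi hθ.1 hθ.2)
  rw [logplusDensity_of_im_pos Q him,
    ENNReal.ofReal_mul (div_nonneg (logplus_nonneg _) Real.two_pi_pos.le)]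

theorem ofReal_tsujiSmallM_div_sq_eq (Q : ℂ → ℂ) {t : ℝ} (ht : 1 < t)
    (hQ : ∀ θ, 0 < Real.sin θ →
      AnalyticAt ℂ Q (((t * Real.sin θ : ℝ) : ℂ) * Complex.exp (θ * Complex.I))) :
    ENNReal.ofReal (tsujiSmallM Q t / t ^ 2) =
      ∫⁻ θ in Ioo 0 π, {θ | 1 ≤ t * Real.sin θ}.indicator (fun θ =>
        logplusDensity Q (((t * Real.sin θ : ℝ) : ℂ) * Complex.exp (θ * Complex.I)) *
          ENNReal.ofReal (t ^ 3 * Real.sin θ ^ 2)⁻¹) θ := by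
  set a := Real.arcsin (1 / t)
  set γ : ℝ → ℂ := fun θ => ((t * Real.sin θ : ℝ) : ℂ) * Complex.exp (θ * Complex.I)
  have ht0 : 0 < t := one_pos.trans ht
  have hS := setOf_one_le_mul_sin_inter_Ioo ht
  have hS_meas : MeasurableSet {θ | 1 ≤ t * Real.sin θ} :=
    measurableSet_le measurable_const (by fun_prop)
  have hsin : ∀ θ ∈ Icc a (π - a), 0 < Real.sin θ := fun θ hθ => by
    obtain ⟨-, h0, hπ⟩ := hS.symm ▸ hθ
    exact Real.sin_pos_of_pos_of_lt_pi h0 hπ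
  have h_int : IntegrableOn (fun θ => logplus ‖Q (γ θ)‖ / (2 * π) *
      (t ^ 3 * Real.sin θ ^ 2)⁻¹) (Icc a (π - a)) := by
    refine ContinuousOn.integrableOn_Icc fun θ hθ => ContinuousAt.continuousWithinAt ?_
    have hγ : Continuous γ := by fun_prop
    have hQγ : ContinuousAt (fun θ => Q (γ θ)) θ :=
      ContinuousAt.comp (g := Q) (hQ θ (hsin θ hθ)).continuousAt hγ.continuousAt
    have hw : ContinuousAt (fun θ => (t ^ 3 * Real.sin θ ^ 2)⁻¹) θ :=
      (by fun_prop : Continuous fun θ => t ^ 3 * Real.sin θ ^ 2).continuousAt.inv₀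
        (by have := hsin θ hθ; positivity)
    exact ((continuous_logplus.continuousAt.comp hQγ.norm).div_const _).mul hw
  have h_eq : tsujiSmallM Q t / t ^ 2 =
      ∫ θ in Icc a (π - a), logplus ‖Q (γ θ)‖ / (2 * π) * (t ^ 3 * Real.sin θ ^ 2)⁻¹ := by
    have hle : a ≤ π - a := by linarith [Real.arcsin_le_pi_div_two (1 / t)]
    rw [tsujiSmallM, intervalIntegral.integral_of_le hle, ← integral_Icc_eq_integral_Ioc,
      mul_div_right_comm, ← integral_const_mul]
    congr 1 with θ
    ring
  rw [h_eq, ofReal_integral_eq_lintegral_ofReal h_int (ae_of_all _ fun θ => by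
      have := logplus_nonneg ‖Q (γ θ)‖; positivity),
    lintegral_indicator hS_meas, Measure.restrict_restrict hS_meas, hS]
  refine setLIntegral_congr_fun measurableSet_Icc fun θ hθ => ?_
  have him : 0 < (γ θ).im := by
    have := hsin θ hθ
    simp only [γ, im_ofReal_mul_exp_mul_I]
    positivity
  rw [logplusDensity_of_im_pos Q him,
    ENNReal.ofReal_mul (div_nonneg (logplus_nonneg _) Real.two_pi_pos.le)]

/-- Lemma 2 (Levin–Ostrovskii): for `Q` meromorphic in the closed upper half-plane and
`R ≥ 1`, `∫_R^∞ m_{0π}(r,Q)/r³ dr ≤ ∫_R^∞ 𝔪(r,Q)/r² dr`. -/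
theorem levin_ostrovskii_integral_inequality (Q : ℂ → ℂ)
    (hQ : MeromorphicOn Q {z : ℂ | 0 ≤ z.im}) (R : ℝ) (hR : 1 ≤ R) :
    ∫⁻ r in Ioi R, ENNReal.ofReal (mHalfCircle Q r / r ^ 3)
      ≤ ∫⁻ r in Ioi R, ENNReal.ofReal (tsujiSmallM Q r / r ^ 2) := by
  have hQ' : MeromorphicOn Q {z : ℂ | 0 < z.im} := hQ.mono_set fun z (hz : 0 < z.im) => hz.le
  have hF : Measurable (Function.uncurry fun (ρ θ : ℝ) =>
      logplusDensity Q (ρ * Complex.exp (θ * Complex.I))) :=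
    (measurable_logplusDensity hQ').comp (by fun_prop)
  calc ∫⁻ r in Ioi R, ENNReal.ofReal (mHalfCircle Q r / r ^ 3)
      ≤ ∫⁻ r in Ioi R, ∫⁻ θ in Ioo 0 π,
          logplusDensity Q (r * Complex.exp (θ * Complex.I)) * ENNReal.ofReal (r ^ 3)⁻¹ :=
        setLIntegral_mono' measurableSet_Ioi fun r hr =>
          ofReal_mHalfCircle_div_cube_le Q ((one_pos.trans_le hR).trans hr)
    _ ≤ _ := lintegral_polar_le_lintegral_tangentCircles _ hF hR
    _ = ∫⁻ r in Ioi R, ENNReal.ofReal (tsujiSmallM Q r / r ^ 2) := by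
        refine setLIntegral_congr_fun_ae measurableSet_Ioi ?_
        filter_upwards [hQ'.ae_analyticAt_tangentCircle] with t hQt htR
        have ht : 1 < t := hR.trans_lt htR
        exact (ofReal_tsujiSmallM_div_sq_eq Q ht (hQt (one_pos.trans ht))).symm
end
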